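/- A torsionless abelian group G binds itself if and only if G does not admit a surjective homomorphism onto S = ⊕_{n∈ℕ} ℤ. -/

import Mathlib

open Cardinal

def Torsionless (G : Type*) [AddCommGroup G] : Prop :=
  ∀ g : G, g ≠ 0 → ∃ f : G →+ ℤ, f g ≠ 0

/-- `G` binds a subgroup `H` if every homomorphism from `G` to a free abelian
group maps `H` into a subgroup of finite rank. -/
def Binds.{u} {G : Type*} [AddCommGroup G] (H : AddSubgroup G) : Prop :=
  ∀ (ι : Type u) (f : G →+ (ι →₀ ℤ)), Module.rank ℤ (H.map f) < ℵ₀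

/-!
Subgroups of free abelian groups are free. For `A ≤ ι →₀ R` over a PID `R`, with `ι`
well-ordered, choose for each `i` a pivot: an element of `A` supported on `Iic i` whose
`i`-th coordinate generates the ideal of all such coordinates. The pivots with nonzero
diagonal entry are triangular, hence independent, and subtracting multiples of them lowers
the top of the support, so by well-founded induction they span `A`.

Hence if some homomorphism `G → ι →₀ ℤ` has image of infinite rank, that image is free of
infinite rank and so maps onto `ℕ →₀ ℤ`. Conversely a surjection onto `ℕ →₀ ℤ` is itself a
homomorphism to a free abelian group whose image has rank `ℵ₀`.
-/

open Set Finsupp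

namespace Finsupp

variable {ι : Type*} [LinearOrder ι]

theorem mem_supported_Iic_max' {M R : Type*} [Semiring R] [AddCommMonoid M] [Module R M]
    (x : ι →₀ M) (h : x.support.Nonempty) :
    x ∈ supported M R (Iic (x.support.max' h)) :=
  (mem_supported R x).mpr fun _ hj => x.support.le_max' _ hj

theorem linearIndependent_of_mem_supported_Iic {κ R : Type*} [Ring R] [NoZeroDivisors R]
    {v : κ → ι →₀ R} {e : κ → ι} (he : Function.Injective e)
    (hv : ∀ k, v k ∈ supported R R (Iic (e k))) (hdiag : ∀ k, v k (e k) ≠ 0) :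
    LinearIndependent R v := by
  classical
  rw [linearIndependent_iff']
  intro s g hsum
  by_contra! hne
  obtain ⟨t, ht, hmax⟩ := (s.filter (g · ≠ 0)).exists_max_image e
    (by simpa [Finset.filter_nonempty_iff] using hne)
  obtain ⟨hts, hgt⟩ := Finset.mem_filter.mp ht
  have hvanish : ∀ u ∈ s, u ≠ t → g u • v u (e t) = 0 := by
    intro u hus hut
    by_cases hgu : g u = 0
    · simp [hgu]
    have hlt : e u < e t := (hmax u (Finset.mem_filter.mpr ⟨hus, hgu⟩)).lt_of_ne (he.ne hut)
    have : v u (e t) = 0 := notMem_support_iff.mp fun h =>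
      hlt.not_ge ((mem_supported R _).mp (hv u) h)
    simp [this]
  have := congrArg (· (e t)) hsum
  simp only [finsetSum_apply, coe_smul, Pi.smul_apply, coe_zero, Pi.zero_apply] at this
  rw [Finset.sum_eq_single t hvanish (absurd hts)] at this
  exact mul_ne_zero hgt (hdiag t) this

end Finsupp

namespace Submodule

variable {ι R : Type*} [LinearOrder ι] [CommRing R] [IsPrincipalIdealRing R]
  (A : Submodule R (ι →₀ R))

noncomputable def leadingIdeal (i : ι) : Ideal R :=
  (A ⊓ supported R R (Iic i)).map (lapply i)

theorem exists_mem_apply_eq_generator (i : ι) :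
    ∃ a ∈ A ⊓ supported R R (Iic i), a i = IsPrincipal.generator (A.leadingIdeal i) := by
  obtain ⟨a, ha, hai⟩ := mem_map.mp (IsPrincipal.generator_mem (A.leadingIdeal i))
  exact ⟨a, ha, hai⟩

noncomputable def pivot (i : ι) : ι →₀ R :=
  (A.exists_mem_apply_eq_generator i).choose

theorem pivot_mem (i : ι) : A.pivot i ∈ A ⊓ supported R R (Iic i) :=
  (A.exists_mem_apply_eq_generator i).choose_spec.1

theorem pivot_apply_self (i : ι) :
    A.pivot i i = IsPrincipal.generator (A.leadingIdeal i) :=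
  (A.exists_mem_apply_eq_generator i).choose_spec.2

theorem exists_smul_pivot_apply_self {i : ι} {x : ι →₀ R} (hx : x ∈ A ⊓ supported R R (Iic i)) :
    ∃ c : R, c • A.pivot i i = x i := by
  have : x i ∈ A.leadingIdeal i := ⟨x, hx, rfl⟩
  obtain ⟨c, hc⟩ := (IsPrincipal.mem_iff_eq_smul_generator _).mp this
  exact ⟨c, by rw [pivot_apply_self, hc]⟩

def pivotIndex : Set ι := {i | A.pivot i i ≠ 0}

theorem linearIndependent_pivot [IsDomain R] :
    LinearIndependent R (fun i : A.pivotIndex => A.pivot i) :=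
  linearIndependent_of_mem_supported_Iic Subtype.val_injective (fun i => (A.pivot_mem i).2)
    fun i => i.2

variable [WellFoundedLT ι]

theorem mem_span_pivot_of_mem_supported_Iic (i : ι) {x : ι →₀ R}
    (hx : x ∈ A ⊓ supported R R (Iic i)) : x ∈ span R (A.pivot '' A.pivotIndex) := by
  induction i using WellFoundedLT.induction generalizing x with
  | _ i IH =>
  obtain ⟨y, hy, hyi, hxy⟩ : ∃ y ∈ A ⊓ supported R R (Iic i), y i = 0 ∧
      x - y ∈ span R (A.pivot '' A.pivotIndex) := by
    obtain ⟨c, hc⟩ := A.exists_smul_pivot_apply_self hx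
    by_cases hi : A.pivot i i = 0
    · exact ⟨x, hx, by rw [← hc, hi, smul_zero], by simp⟩
    · refine ⟨x - c • A.pivot i, sub_mem hx (smul_mem _ c (A.pivot_mem i)), by simp [← hc], ?_⟩
      rw [sub_sub_cancel]
      exact smul_mem _ c (subset_span ⟨i, hi, rfl⟩)
  rw [← sub_add_cancel x y]
  refine add_mem hxy ?_
  rcases y.support.eq_empty_or_nonempty with h | h
  · simp [support_eq_empty.mp h]
  have hmax := y.support.max'_mem h
  refine IH _ ?_ ⟨hy.1, mem_supported_Iic_max' y h⟩
  refine ((mem_supported R y).mp hy.2 hmax).lt_of_ne ?_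
  rintro heq
  exact mem_support_iff.mp hmax (heq ▸ hyi)

theorem span_pivot : span R (A.pivot '' A.pivotIndex) = A := by
  refine le_antisymm (span_le.mpr ?_) fun x hx => ?_
  · rintro _ ⟨i, -, rfl⟩
    exact (A.pivot_mem i).1
  rcases x.support.eq_empty_or_nonempty with h | h
  · simp [support_eq_empty.mp h]
  exact A.mem_span_pivot_of_mem_supported_Iic _ ⟨hx, mem_supported_Iic_max' x h⟩

theorem free_of_wellFoundedLT [IsDomain R] : Module.Free R A := by
  have hspan : span R (range fun i : A.pivotIndex => A.pivot i) = A := by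
    rw [← image_eq_range, span_pivot]
  have := Module.Free.of_basis (.span A.linearIndependent_pivot)
  exact .of_equiv (LinearEquiv.ofEq _ _ hspan)

end Submodule

theorem Submodule.free_of_isPrincipalIdealRing {R M : Type*} [CommRing R] [IsDomain R]
    [IsPrincipalIdealRing R] [AddCommGroup M] [Module R M] [Module.Free R M]
    (N : Submodule R M) : Module.Free R N := by
  let b := Module.Free.chooseBasis R M
  let : LinearOrder (Module.Free.ChooseBasisIndex R M) :=
    IsWellOrder.linearOrder WellOrderingRel
  have : WellFoundedLT (Module.Free.ChooseBasisIndex R M) := ⟨WellOrderingRel.isWellOrder.wf⟩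
  have := (N.map b.repr.toLinearMap).free_of_wellFoundedLT
  exact .of_equiv (N.equivMapOfInjective _ b.repr.injective).symm

theorem Module.Free.exists_surjective_finsupp_nat {R M : Type*} [Ring R] [StrongRankCondition R]
    [AddCommGroup M] [Module R M] [Module.Free R M] (h : ℵ₀ ≤ Module.rank R M) :
    ∃ f : M →ₗ[R] ℕ →₀ R, Function.Surjective f := by
  let b := chooseBasis R M
  have : Infinite (ChooseBasisIndex R M) := by
    rwa [Cardinal.infinite_iff, ← rank_eq_card_chooseBasisIndex]
  have hp := Function.invFun_surjective (Infinite.natEmbedding (ChooseBasisIndex R M)).injective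
  exact ⟨lmapDomain R R (Function.invFun (Infinite.natEmbedding _)) ∘ₗ b.repr,
    (mapDomain_surjective hp).comp b.repr.surjective⟩

instance AddSubgroup.moduleFree {M : Type*} [AddCommGroup M] [Module.Free ℤ M]
    (H : AddSubgroup M) : Module.Free ℤ H :=
  have := H.toIntSubmodule.free_of_isPrincipalIdealRing
  .of_equiv (M := H.toIntSubmodule) (AddEquiv.refl H).toIntLinearEquiv

theorem stmt_2.{u} {G : Type*} [AddCommGroup G] (hG : Torsionless G) :
    Binds.{u} (⊤ : AddSubgroup G) ↔
      ¬ ∃ f : G →+ (ℕ →₀ ℤ), Function.Surjective f := by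
  constructor
  · rintro hB ⟨f, hf⟩
    let e := Finsupp.domCongr (M := ℤ) (Equiv.ulift.{u, 0} (α := ℕ)).symm
    let g : G →+ (ULift.{u} ℕ →₀ ℤ) := e.toAddMonoidHom.comp f
    have hg : (⊤ : AddSubgroup G).map g = ⊤ :=
      AddSubgroup.map_top_of_surjective g (e.surjective.comp hf)
    have hrank : Module.rank ℤ ((⊤ : AddSubgroup G).map g) = ℵ₀ := by
      rw [((AddEquiv.addSubgroupCongr hg).trans AddSubgroup.topEquiv).toIntLinearEquiv.rank_eq,
        rank_finsupp_self, mk_uLift, mk_nat, lift_aleph0, lift_aleph0]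
    exact (hrank ▸ hB _ g).false
  · rintro hns ι f
    by_contra! hrank
    obtain ⟨g, hg⟩ := Module.Free.exists_surjective_finsupp_nat hrank
    let e : G ≃+ (⊤ : AddSubgroup G) := AddSubgroup.topEquiv.symm
    exact hns ⟨g.toAddMonoidHom.comp ((f.addSubgroupMap ⊤).comp e.toAddMonoidHom),
      hg.comp ((f.addSubgroupMap_surjective ⊤).comp e.surjective)⟩
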